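/- arXiv:1304.5001 — 2 statements merged into one kernel-verified Lean document; each statement's English description precedes it below -/
import Mathlib

section
/- Let Y be a mean zero random variable with variance σ² ∈ (0,∞), and let Y* be defined on the same probability space and have the Y-zero biased distribution. Suppose Y − Y* ≤ c almost surely for some constant c > 0. Fix t > e and set θ = (log t − log log t)/c; if E[exp(−θY)] is finite, then P(Y ≤ −t) ≤ exp(−(t/c)(log t − log log t − σ²/c)). -/
open MeasureTheory ProbabilityTheory Real

/-- `Ystar` has the `Y`-zero biased distribution with respect to variance `σ2`:
`E[Y f(Y)] = σ2 * E[f'(Ystar)]` for every (absolutely continuous) differentiable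
function `f` with derivative `f'` for which both expectations exist. -/
def ZeroBiased {Ω : Type*} [MeasurableSpace Ω] (μ : Measure Ω)
    (Y Ystar : Ω → ℝ) (σ2 : ℝ) : Prop :=
  ∀ f f' : ℝ → ℝ, (∀ x, HasDerivAt f (f' x) x) →
    Integrable (fun ω => Y ω * f (Y ω)) μ →
    Integrable (fun ω => f' (Ystar ω)) μ →
    ∫ ω, Y ω * f (Y ω) ∂μ = σ2 * ∫ ω, f' (Ystar ω) ∂μ

/-! Chernoff's bound at `-θ` reduces the claim to bounding `m(s) = E[exp (s Y)]` at `s = -θ`.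
The zero-bias identity for `f = exp (s ·)` gives `m'(s) = σ² s E[exp (s Y*)]`, and `Y* ≥ Y - c`
turns this, for `s ≤ 0`, into the differential inequality `m'(s) ≥ σ² s e^{-sc} m(s)`.
Integrating it over `[-θ, 0]` gives `log m(-θ) ≤ σ²/c² (e^{θc} (θc - 1) + 1)`, and the choice of
`θ` makes `e^{θc} = t / log t`, so the exponent is at most `-θt + σ² t / c²`. -/

open Set

theorem le_mul_exp_sub_of_mul_le_hasDerivAt {f f' G g : ℝ → ℝ} {a b : ℝ} (hab : a ≤ b)
    (hf : ContinuousOn f (Icc a b)) (hG : ContinuousOn G (Icc a b))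
    (hf' : ∀ x ∈ Ioo a b, HasDerivAt f (f' x) x) (hG' : ∀ x ∈ Ioo a b, HasDerivAt G (g x) x)
    (hle : ∀ x ∈ Ioo a b, g x * f x ≤ f' x) :
    f a ≤ f b * exp (G a - G b) := by
  have hmono : MonotoneOn (fun x => f x * exp (-G x)) (Icc a b) := by
    refine monotoneOn_of_hasDerivWithinAt_nonneg (convex_Icc a b) (hf.mul hG.neg.rexp)
      (fun x hx => ?_) (fun x hx => ?_)
      (f' := fun x => f' x * exp (-G x) + f x * (exp (-G x) * -g x))
    · rw [interior_Icc] at hx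
      exact ((hf' x hx).mul (hG' x hx).neg.exp).hasDerivWithinAt
    · rw [interior_Icc] at hx
      have hdiff : 0 ≤ (f' x - g x * f x) * exp (-G x) :=
        mul_nonneg (sub_nonneg.2 (hle x hx)) (exp_pos _).le
      linarith
  calc f a = f a * exp (-G a) * exp (G a) := by rw [mul_assoc, ← exp_add]; simp
    _ ≤ f b * exp (-G b) * exp (G a) :=
        mul_le_mul_of_nonneg_right (hmono (left_mem_Icc.2 hab) (right_mem_Icc.2 hab) hab)
          (exp_pos _).le
    _ = f b * exp (G a - G b) := by rw [mul_assoc, ← exp_add]; ring_nf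

theorem exp_mul_le_exp_mul_add_exp_mul {a b t : ℝ} (hat : a ≤ t) (htb : t ≤ b) (x : ℝ) :
    exp (t * x) ≤ exp (a * x) + exp (b * x) := by
  rcases le_total 0 x with hx | hx
  · have : exp (t * x) ≤ exp (b * x) := exp_le_exp.2 (by nlinarith)
    linarith [exp_pos (a * x)]
  · have : exp (t * x) ≤ exp (a * x) := exp_le_exp.2 (by nlinarith)
    linarith [exp_pos (b * x)]

namespace ProbabilityTheory

variable {Ω : Type*} [MeasurableSpace Ω] {μ : Measure Ω} {X Y : Ω → ℝ}

theorem continuousOn_mgf_Icc {a b : ℝ} (ha : a ∈ integrableExpSet X μ)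
    (hb : b ∈ integrableExpSet X μ) : ContinuousOn (mgf X μ) (Icc a b) :=
  continuousOn_of_dominated (fun _ ht => (integrable_exp_mul_of_le_of_le ha hb ht.1 ht.2).1)
    (fun _ ht => ae_of_all _ fun ω => by
      rw [norm_of_nonneg (exp_nonneg _)]
      exact exp_mul_le_exp_mul_add_exp_mul ht.1 ht.2 _)
    (ha.add hb) (ae_of_all _ fun _ => by fun_prop)

theorem mgf_le_exp_mul_mgf_of_sub_le {c s : ℝ} (hXY : ∀ᵐ ω ∂μ, X ω - Y ω ≤ c) (hs : s ≤ 0)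
    (hX : Integrable (fun ω => exp (s * X ω)) μ) :
    mgf Y μ s ≤ exp (-(s * c)) * mgf X μ s := by
  have hshift : Integrable (fun ω => exp (s * (X ω + -c))) μ := by
    simpa only [mul_add, exp_add] using hX.mul_const (exp (s * -c))
  calc mgf Y μ s ≤ mgf (fun ω => X ω + -c) μ s :=
        mgf_anti_of_nonpos (hXY.mono fun ω hω => by dsimp only; linarith) hs hshift
    _ = exp (-(s * c)) * mgf X μ s := by rw [mgf_add_const, mul_comm, mul_neg]

theorem integrable_exp_mul_of_sub_le {c s : ℝ} (hY : AEStronglyMeasurable Y μ)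
    (hXY : ∀ᵐ ω ∂μ, X ω - Y ω ≤ c) (hs : s ≤ 0) (hX : Integrable (fun ω => exp (s * X ω)) μ) :
    Integrable (fun ω => exp (s * Y ω)) μ := by
  refine (hX.const_mul (exp (-(s * c)))).mono'
    (continuous_exp.comp_aestronglyMeasurable (hY.const_mul s)) ?_
  filter_upwards [hXY] with ω hω
  rw [norm_of_nonneg (exp_nonneg _), ← exp_add, exp_le_exp]
  nlinarith

end ProbabilityTheory

namespace ZeroBiased

variable {Ω : Type*} [MeasurableSpace Ω] {μ : Measure Ω} {Y Ystar : Ω → ℝ} {σ2 : ℝ}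

theorem integral_mul_exp_mul (hzb : ZeroBiased μ Y Ystar σ2) {s : ℝ}
    (hY : Integrable (fun ω => Y ω * exp (s * Y ω)) μ)
    (hYstar : Integrable (fun ω => exp (s * Ystar ω)) μ) :
    μ[fun ω => Y ω * exp (s * Y ω)] = σ2 * s * mgf Ystar μ s := by
  have hderiv (x : ℝ) : HasDerivAt (fun x => exp (s * x)) (s * exp (s * x)) x :=
    ((hasDerivAt_id' x).const_mul s).exp.congr_deriv (by ring)
  rw [hzb _ _ hderiv hY (hYstar.const_mul s), integral_const_mul, mgf, mul_assoc]

theorem mul_mgf_le_deriv_mgf (hzb : ZeroBiased μ Y Ystar σ2) (hσ2 : 0 ≤ σ2)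
    (hYstar : AEStronglyMeasurable Ystar μ) {c s : ℝ} (hbdd : ∀ᵐ ω ∂μ, Y ω - Ystar ω ≤ c)
    (hs : s ≤ 0) (hsY : s ∈ interior (integrableExpSet Y μ)) :
    σ2 * s * exp (-(s * c)) * mgf Y μ s ≤ deriv (mgf Y μ) s := by
  have hint := interior_subset (s := integrableExpSet Y μ) hsY
  rw [deriv_mgf hsY, hzb.integral_mul_exp_mul
    (by simpa using integrable_pow_mul_exp_of_mem_interior_integrableExpSet hsY 1)
    (integrable_exp_mul_of_sub_le hYstar hbdd hs hint), mul_assoc]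
  exact mul_le_mul_of_nonpos_left (mgf_le_exp_mul_mgf_of_sub_le hbdd hs hint)
    (mul_nonpos_of_nonneg_of_nonpos hσ2 hs)

theorem mgf_neg_le [IsProbabilityMeasure μ] (hzb : ZeroBiased μ Y Ystar σ2) (hσ2 : 0 ≤ σ2)
    (hYstar : AEStronglyMeasurable Ystar μ) {c θ : ℝ} (hc : c ≠ 0)
    (hbdd : ∀ᵐ ω ∂μ, Y ω - Ystar ω ≤ c) (hθ : 0 ≤ θ)
    (hint : Integrable (fun ω => exp (-θ * Y ω)) μ) :
    mgf Y μ (-θ) ≤ exp (σ2 / c ^ 2 * (exp (θ * c) * (θ * c - 1) + 1)) := by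
  set G : ℝ → ℝ := fun s => σ2 / c ^ 2 * (exp (-(s * c)) * (-(s * c) - 1) + 1)
  have hG (s : ℝ) : HasDerivAt G (σ2 * s * exp (-(s * c))) s := by
    have hlin : HasDerivAt (fun x => -(x * c)) (-c) s := (hasDerivAt_mul_const c).fun_neg
    have h := ((hlin.exp.mul (hlin.sub_const 1)).add_const 1).const_mul (σ2 / c ^ 2)
    refine h.congr_deriv ?_
    field_simp
    ring
  have hzero : (0 : ℝ) ∈ integrableExpSet Y μ := by simp [integrableExpSet]
  have hinterior : Ioo (-θ) 0 ⊆ interior (integrableExpSet Y μ) := by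
    rw [← interior_Icc]
    exact interior_mono fun s hs => integrable_exp_mul_of_le_of_le hint hzero hs.1 hs.2
  have key := le_mul_exp_sub_of_mul_le_hasDerivAt (neg_nonpos.2 hθ)
    (continuousOn_mgf_Icc hint hzero) (by fun_prop)
    (fun s hs => (differentiableAt_mgf (hinterior hs)).hasDerivAt) (fun s _ => hG s)
    (fun s hs => hzb.mul_mgf_le_deriv_mgf hσ2 hYstar hbdd hs.2.le (hinterior hs))
  simpa [G, mgf_zero] using key

end ZeroBiased

theorem div_log_mul_sub_log_log_sub_one_add_one_le {t : ℝ} (ht0 : 0 < t) (ht : 1 < log t) :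
    t / log t * (log t - log (log t) - 1) + 1 ≤ t := by
  have hL : 0 < log t := one_pos.trans ht
  have hratio : 1 ≤ t / log t := by
    rw [le_div_iff₀ hL, one_mul]
    linarith [log_le_sub_one_of_pos ht0]
  have hloglog : 0 < log (log t) := log_pos ht
  have hcancel : t / log t * log t = t := div_mul_cancel₀ t hL.ne'
  nlinarith

theorem zero_bias_left_tail_tlogt_general
    {Ω : Type*} [MeasurableSpace Ω] (μ : Measure Ω) [IsProbabilityMeasure μ]
    (Y Ystar : Ω → ℝ) (hYstar : Measurable Ystar)
    (σ2 : ℝ) (hσ2 : 0 < σ2)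
    (hzb : ZeroBiased μ Y Ystar σ2)
    (c : ℝ) (hc : 0 < c)
    (hbdd : ∀ᵐ ω ∂μ, Y ω - Ystar ω ≤ c)
    (t : ℝ) (ht : Real.exp 1 < t)
    (hmgf : Integrable (fun ω => exp (-((Real.log t - Real.log (Real.log t)) / c) * Y ω)) μ) :
    (μ {ω | Y ω ≤ -t}).toReal ≤
      exp (-(t / c) * (Real.log t - Real.log (Real.log t) - σ2 / c)) := by
  have ht0 : 0 < t := (exp_pos 1).trans ht
  have hL : 1 < log t := (lt_log_iff_exp_lt ht0).2 ht
  set θ := (log t - log (log t)) / c with hθ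
  have hθc : θ * c = log t - log (log t) := div_mul_cancel₀ _ hc.ne'
  have hθ0 : 0 < θ := div_pos (by linarith [log_le_sub_one_of_pos (one_pos.trans hL)]) hc
  have hexp : exp (θ * c) = t / log t := by
    rw [hθc, exp_sub, exp_log ht0, exp_log (one_pos.trans hL)]
  calc (μ {ω | Y ω ≤ -t}).toReal ≤ exp (-(-θ) * -t) * mgf Y μ (-θ) :=
        measure_le_le_exp_mul_mgf (-t) (by linarith) hmgf
    _ ≤ exp (-(-θ) * -t) * exp (σ2 / c ^ 2 * (exp (θ * c) * (θ * c - 1) + 1)) := by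
        gcongr
        exact hzb.mgf_neg_le hσ2.le hYstar.aestronglyMeasurable hc.ne' hbdd hθ0.le hmgf
    _ ≤ exp (-(t / c) * (log t - log (log t) - σ2 / c)) := by
        rw [← exp_add, exp_le_exp, hexp, hθc]
        have := mul_le_mul_of_nonneg_left (div_log_mul_sub_log_log_sub_one_add_one_le ht0 hL)
          (by positivity : 0 ≤ σ2 / c ^ 2)
        have hrhs : -(t / c) * (log t - log (log t) - σ2 / c)
            = -(θ * t) + σ2 / c ^ 2 * t := by
          rw [hθ]; field_simp; ring
        rw [hrhs]
        linarith

theorem zero_bias_left_tail_tlogt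
    {Ω : Type*} [MeasurableSpace Ω] (μ : Measure Ω) [IsProbabilityMeasure μ]
    (Y Ystar : Ω → ℝ) (hY : Measurable Y) (hYstar : Measurable Ystar)
    (σ2 : ℝ) (hσ2 : 0 < σ2)
    (hmean : ∫ ω, Y ω ∂μ = 0) (hL2 : MemLp Y 2 μ) (hvar : variance Y μ = σ2)
    (hzb : ZeroBiased μ Y Ystar σ2)
    (c : ℝ) (hc : 0 < c)
    (hbdd : ∀ᵐ ω ∂μ, Y ω - Ystar ω ≤ c)
    (t : ℝ) (ht : Real.exp 1 < t)
    (hmgf : Integrable (fun ω => exp (-((Real.log t - Real.log (Real.log t)) / c) * Y ω)) μ) :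
    (μ {ω | Y ω ≤ -t}).toReal ≤
      exp (-(t / c) * (Real.log t - Real.log (Real.log t) - σ2 / c)) :=
  zero_bias_left_tail_tlogt_general μ Y Ystar hYstar σ2 hσ2 hzb c hc hbdd t ht hmgf
end

section
/- Let Y be a mean zero random variable with variance σ² ∈ (0,∞), and let Y* be defined on the same probability space and have the Y-zero biased distribution. Suppose Y* − Y ≤ c almost surely for some constant c > 0, and that m(s) = E[exp(sY)] is finite for all s ∈ [0, 1/c). Then for all θ ∈ (0, 1/c), E[exp(θY)] ≤ exp(σ²θ² / (2(1 − θc))). -/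
open MeasureTheory ProbabilityTheory Real

/-!
Applying the zero-bias identity to `f x = exp (s * x)` gives
`m'(s) = E[Y e^{sY}] = σ² s E[e^{sY*}]`, and `Y* ≤ Y + c` bounds the right-hand side by
`σ² s e^{sc} m(s) ≤ σ² s m(s) / (1 - θc)` for `s ≤ θ`. Integrating this differential inequality
for `log m` over `[0, θ]`, starting from `m(0) = 1`, gives the bound.
-/

theorem le_mul_exp_of_hasDerivAt_le_mul {f f' : ℝ → ℝ} {a b K : ℝ} (hab : a ≤ b)
    (hf : ContinuousOn f (Set.Icc a b)) (hpos : ∀ s ∈ Set.Icc a b, 0 < f s)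
    (hf' : ∀ s ∈ Set.Ioo a b, HasDerivAt f (f' s) s)
    (hle : ∀ s ∈ Set.Ioo a b, f' s ≤ K * s * f s) :
    f b ≤ f a * exp (K * (b ^ 2 - a ^ 2) / 2) := by
  have hanti : AntitoneOn (fun s => log (f s) - K * s ^ 2 / 2) (Set.Icc a b) := by
    refine antitoneOn_of_hasDerivWithinAt_nonpos (f' := fun s => f' s / f s - K * s)
      (convex_Icc a b) ((hf.log fun s hs => (hpos s hs).ne').sub (by fun_prop)) ?_ ?_
    all_goals
      rw [interior_Icc]
      intro s hs
      have hfs := hpos s (Set.Ioo_subset_Icc_self hs)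
    · refine (HasDerivAt.congr_deriv (((hf' s hs).log hfs.ne').sub
        (((hasDerivAt_pow 2 s).const_mul K).div_const 2)) ?_).hasDerivWithinAt
      push_cast
      ring
    · rw [sub_nonpos, div_le_iff₀ hfs]
      exact hle s hs
  have hlog : log (f b) ≤ log (f a) + K * (b ^ 2 - a ^ 2) / 2 := by
    linarith [hanti (Set.left_mem_Icc.2 hab) (Set.right_mem_Icc.2 hab) hab]
  calc f b = exp (log (f b)) := (exp_log (hpos b (Set.right_mem_Icc.2 hab))).symm
    _ ≤ exp (log (f a) + K * (b ^ 2 - a ^ 2) / 2) := exp_le_exp.2 hlog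
    _ = f a * exp (K * (b ^ 2 - a ^ 2) / 2) := by
      rw [exp_add, exp_log (hpos a (Set.left_mem_Icc.2 hab))]

theorem exp_mul_le_one_div_one_sub_mul {s θ c : ℝ} (hc : 0 ≤ c) (hs : 0 ≤ s) (hsθ : s ≤ θ)
    (hθc : θ * c < 1) : exp (s * c) ≤ 1 / (1 - θ * c) := by
  have hsc : s * c ≤ θ * c := mul_le_mul_of_nonneg_right hsθ hc
  calc exp (s * c) ≤ 1 / (1 - s * c) :=
        exp_bound_div_one_sub_of_interval (mul_nonneg hs hc) (hsc.trans_lt hθc)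
    _ ≤ 1 / (1 - θ * c) := by gcongr

section

variable {Ω : Type*} [MeasurableSpace Ω] {μ : Measure Ω}

theorem continuousOn_mgf_Icc {X : Ω → ℝ} {a b : ℝ} (hX : AEMeasurable X μ)
    (ha : Integrable (fun ω => exp (a * X ω)) μ) (hb : Integrable (fun ω => exp (b * X ω)) μ) :
    ContinuousOn (mgf X μ) (Set.Icc a b) := by
  refine continuousOn_of_dominated (bound := fun ω => exp (a * X ω) + exp (b * X ω))
    (fun t _ => by fun_prop) (fun t ht => ae_of_all _ fun ω => ?_) (ha.add hb)
    (ae_of_all _ fun ω => by fun_prop)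
  rw [norm_of_nonneg (exp_pos _).le]
  rcases le_total 0 (X ω) with hx | hx
  · have := exp_le_exp.2 (mul_le_mul_of_nonneg_right ht.2 hx)
    linarith [exp_pos (a * X ω)]
  · have := exp_le_exp.2 (mul_le_mul_of_nonpos_right ht.1 hx)
    linarith [exp_pos (b * X ω)]

theorem mgf_le_exp_of_integral_mul_exp_le [IsProbabilityMeasure μ] {X : Ω → ℝ} {θ K : ℝ}
    (hθ : 0 < θ) (hint : ∀ s ∈ Set.Icc 0 θ, Integrable (fun ω => exp (s * X ω)) μ)
    (hle : ∀ s ∈ Set.Ioo 0 θ, μ[fun ω => X ω * exp (s * X ω)] ≤ K * s * mgf X μ s) :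
    mgf X μ θ ≤ exp (K * θ ^ 2 / 2) := by
  have h0 := hint 0 (Set.left_mem_Icc.2 hθ.le)
  have hθ' := hint θ (Set.right_mem_Icc.2 hθ.le)
  have hinterior : Set.Ioo 0 θ ⊆ interior (integrableExpSet X μ) :=
    interior_maximal (fun s hs => hint s (Set.Ioo_subset_Icc_self hs)) isOpen_Ioo
  have := le_mul_exp_of_hasDerivAt_le_mul hθ.le
    (continuousOn_mgf_Icc (aemeasurable_of_integrable_exp_mul hθ.ne h0 hθ') h0 hθ')
    (fun s hs => mgf_pos (hint s hs)) (fun s hs => hasDerivAt_mgf (hinterior hs)) hle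
  simpa using this

theorem integral_mul_exp_le_of_zeroBiased {Y Ystar : Ω → ℝ} {σ2 c s : ℝ}
    (hzb : ZeroBiased μ Y Ystar σ2) (hσ2 : 0 ≤ σ2)
    (hYstar : AEStronglyMeasurable Ystar μ) (hbdd : ∀ᵐ ω ∂μ, Ystar ω - Y ω ≤ c) (hs : 0 ≤ s)
    (hs_interior : s ∈ interior (integrableExpSet Y μ)) :
    μ[fun ω => Y ω * exp (s * Y ω)] ≤ σ2 * s * exp (s * c) * mgf Y μ s := by
  have hexp : Integrable (fun ω => exp (s * Y ω)) μ :=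
    interior_subset (s := integrableExpSet Y μ) hs_interior
  have hmul : Integrable (fun ω => Y ω * exp (s * Y ω)) μ := by
    simpa using integrable_pow_mul_exp_of_mem_interior_integrableExpSet hs_interior 1
  have hdom : ∀ᵐ ω ∂μ, exp (s * Ystar ω) ≤ exp (s * c) * exp (s * Y ω) := by
    filter_upwards [hbdd] with ω hω
    rw [← exp_add, exp_le_exp]
    nlinarith
  have hstar : Integrable (fun ω => exp (s * Ystar ω)) μ :=
    (hexp.const_mul _).mono' (by fun_prop)
      (hdom.mono fun ω h => by rwa [norm_of_nonneg (exp_pos _).le])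
  have hf : ∀ x, HasDerivAt (fun x => exp (s * x)) (exp (s * x) * s) x := fun x => by
    simpa using ((hasDerivAt_id x).const_mul s).exp
  calc μ[fun ω => Y ω * exp (s * Y ω)] = σ2 * ∫ ω, exp (s * Ystar ω) * s ∂μ :=
        hzb _ _ hf hmul (hstar.mul_const s)
    _ = σ2 * s * ∫ ω, exp (s * Ystar ω) ∂μ := by rw [integral_mul_const]; ring
    _ ≤ σ2 * s * ∫ ω, exp (s * c) * exp (s * Y ω) ∂μ :=
        mul_le_mul_of_nonneg_left (integral_mono_ae hstar (hexp.const_mul _) hdom)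
          (mul_nonneg hσ2 hs)
    _ = σ2 * s * exp (s * c) * mgf Y μ s := by rw [integral_const_mul, mgf]; ring

end

theorem zero_bias_mgf_bound_general
    {Ω : Type*} [MeasurableSpace Ω] (μ : Measure Ω) [IsProbabilityMeasure μ]
    (Y Ystar : Ω → ℝ) (hYstar : Measurable Ystar)
    (σ2 : ℝ) (hσ2 : 0 < σ2)
    (hzb : ZeroBiased μ Y Ystar σ2)
    (c : ℝ)
    (hbdd : ∀ᵐ ω ∂μ, Ystar ω - Y ω ≤ c)
    (hmgf : ∀ s ∈ Set.Ico (0 : ℝ) (1 / c), Integrable (fun ω => exp (s * Y ω)) μ) :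
    ∀ θ ∈ Set.Ioo (0 : ℝ) (1 / c),
      ∫ ω, exp (θ * Y ω) ∂μ ≤ exp (σ2 * θ ^ 2 / (2 * (1 - θ * c))) := by
  rintro θ ⟨hθ, hθc⟩
  have hc : 0 < c := one_div_pos.1 (hθ.trans hθc)
  have hθc' : θ * c < 1 := (lt_div_iff₀ hc).1 hθc
  have hint : ∀ s ∈ Set.Icc 0 θ, Integrable (fun ω => exp (s * Y ω)) μ :=
    fun s hs => hmgf s ⟨hs.1, hs.2.trans_lt hθc⟩
  have hderiv_le : ∀ s ∈ Set.Ioo 0 θ,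
      μ[fun ω => Y ω * exp (s * Y ω)] ≤ σ2 / (1 - θ * c) * s * mgf Y μ s := by
    rintro s ⟨hs, hsθ⟩
    have hs_interior : s ∈ interior (integrableExpSet Y μ) :=
      interior_maximal (fun t ht => hint t (Set.Ioo_subset_Icc_self ht)) isOpen_Ioo ⟨hs, hsθ⟩
    calc μ[fun ω => Y ω * exp (s * Y ω)] ≤ σ2 * s * exp (s * c) * mgf Y μ s :=
          integral_mul_exp_le_of_zeroBiased hzb hσ2.le hYstar.aestronglyMeasurable hbdd hs.le
            hs_interior
      _ ≤ σ2 * s * (1 / (1 - θ * c)) * mgf Y μ s := by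
          have := mgf_pos (hint s ⟨hs.le, hsθ.le⟩)
          gcongr
          exact exp_mul_le_one_div_one_sub_mul hc.le hs.le hsθ.le hθc'
      _ = σ2 / (1 - θ * c) * s * mgf Y μ s := by ring
  calc ∫ ω, exp (θ * Y ω) ∂μ = mgf Y μ θ := rfl
    _ ≤ exp (σ2 / (1 - θ * c) * θ ^ 2 / 2) :=
        mgf_le_exp_of_integral_mul_exp_le hθ hint hderiv_le
    _ = exp (σ2 * θ ^ 2 / (2 * (1 - θ * c))) := by
        congr 1
        field_simp

theorem zero_bias_mgf_bound
    {Ω : Type*} [MeasurableSpace Ω] (μ : Measure Ω) [IsProbabilityMeasure μ]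
    (Y Ystar : Ω → ℝ) (hY : Measurable Y) (hYstar : Measurable Ystar)
    (σ2 : ℝ) (hσ2 : 0 < σ2)
    (hmean : ∫ ω, Y ω ∂μ = 0) (hL2 : MemLp Y 2 μ) (hvar : variance Y μ = σ2)
    (hzb : ZeroBiased μ Y Ystar σ2)
    (c : ℝ) (hc : 0 < c)
    (hbdd : ∀ᵐ ω ∂μ, Ystar ω - Y ω ≤ c)
    (hmgf : ∀ s ∈ Set.Ico (0 : ℝ) (1 / c), Integrable (fun ω => exp (s * Y ω)) μ) :
    ∀ θ ∈ Set.Ioo (0 : ℝ) (1 / c),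
      ∫ ω, exp (θ * Y ω) ∂μ ≤ exp (σ2 * θ ^ 2 / (2 * (1 - θ * c))) :=
  zero_bias_mgf_bound_general μ Y Ystar hYstar σ2 hσ2 hzb c hbdd hmgf
end
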